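/- Let F be a Minkowski norm on a finite-dimensional real vector space E. Then for every α ∈ E* \ {0}, the function (F*)²/2 is Fréchet differentiable at α and, under the canonical identification of E** with E, its derivative equals the Legendre transform: L*(α) = D((F*)²/2)(α). (In coordinates: L*(α) = Σ_i (1/2)·∂[(F*)²]/∂α_i(α)·∂/∂xⁱ, and this expression extends to α = 0 with L*(0) = 0.) -/

import Mathlib

/-- The fundamental tensor of `F` at `v`: `g_v(w₁, w₂) := (1/2)·D²(F²)(v)[w₁, w₂]`,
given by the second Fréchet derivative of `F²` at `v`. -/
noncomputable def fundamentalTensor {E : Type*} [NormedAddCommGroup E] [NormedSpace ℝ E]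
    (F : E → ℝ) (v w₁ w₂ : E) : ℝ :=
  (1 / 2 : ℝ) * iteratedFDeriv ℝ 2 (fun x => F x ^ 2) v ![w₁, w₂]

/-- A **Minkowski norm** on a real vector space `E`: `F ≥ 0`, positive away from `0`,
smooth on `E \ {0}`, positively `1`-homogeneous, and with positive definite
fundamental tensor `g_v` for every `v ≠ 0`. -/
structure IsMinkowskiNorm {E : Type*} [NormedAddCommGroup E] [NormedSpace ℝ E]
    (F : E → ℝ) : Prop where
  nonneg : ∀ v : E, 0 ≤ F v
  pos : ∀ v : E, v ≠ 0 → 0 < F v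
  smooth : ContDiffOn ℝ (⊤ : ℕ∞) F {(0 : E)}ᶜ
  homog : ∀ c : ℝ, 0 ≤ c → ∀ v : E, F (c • v) = c * F v
  posdef : ∀ v : E, v ≠ 0 → ∀ w : E, w ≠ 0 → 0 < fundamentalTensor F v w w

/-- The dual norm `F*(α) := sup {α(v) : F(v) ≤ 1}` on the dual space. -/
noncomputable def dualNorm {E : Type*} [NormedAddCommGroup E] [NormedSpace ℝ E]
    (F : E → ℝ) (α : E →L[ℝ] ℝ) : ℝ :=
  sSup ((fun v => α v) '' {v : E | F v ≤ 1})

open Filter Topology Set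

section Aux
variable {E : Type*} [NormedAddCommGroup E] [NormedSpace ℝ E] {F : E → ℝ}

lemma mink_zero (hF : IsMinkowskiNorm F) : F 0 = 0 := by
  have := hF.homog 0 le_rfl 0
  simpa using this

lemma mink_homog' (hF : IsMinkowskiNorm F) (v : E) (hv : v ≠ 0) :
    F v = ‖v‖ * F (‖v‖⁻¹ • v) := by
  rw [← hF.homog ‖v‖ (norm_nonneg v), smul_smul,
    mul_inv_cancel₀ (norm_ne_zero_iff.2 hv), one_smul]

lemma mink_bounds [FiniteDimensional ℝ E] [Nontrivial E] (hF : IsMinkowskiNorm F) :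
    ∃ c C : ℝ, 0 < c ∧ (∀ v : E, c * ‖v‖ ≤ F v) ∧ (∀ v : E, F v ≤ C * ‖v‖) := by
  have hS : IsCompact (Metric.sphere (0:E) 1) := isCompact_sphere 0 1
  have hne : (Metric.sphere (0:E) 1).Nonempty := NormedSpace.sphere_nonempty.2 zero_le_one
  have hsub : Metric.sphere (0:E) 1 ⊆ {(0:E)}ᶜ := by
    intro x hx
    simp only [Metric.mem_sphere, dist_zero_right] at hx
    simp only [Set.mem_compl_iff, Set.mem_singleton_iff]
    intro h; rw [h] at hx; simp at hx
  have hcont : ContinuousOn F (Metric.sphere (0:E) 1) := hF.smooth.continuousOn.mono hsub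
  obtain ⟨x0, hx0, hmin⟩ := hS.exists_isMinOn hne hcont
  obtain ⟨x1, hx1, hmax⟩ := hS.exists_isMaxOn hne hcont
  refine ⟨F x0, F x1, hF.pos x0 (hsub hx0), ?_, ?_⟩
  · intro v
    rcases eq_or_ne v 0 with rfl | hv
    · simp [mink_zero hF]
    · have hu : ‖v‖⁻¹ • v ∈ Metric.sphere (0:E) 1 := by
        simp [norm_smul, inv_mul_cancel₀ (norm_ne_zero_iff.2 hv)]
      have := hmin hu
      rw [mink_homog' hF v hv]
      calc F x0 * ‖v‖ ≤ F (‖v‖⁻¹ • v) * ‖v‖ := by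
            exact mul_le_mul_of_nonneg_right this (norm_nonneg v)
        _ = ‖v‖ * F (‖v‖⁻¹ • v) := mul_comm _ _
  · intro v
    rcases eq_or_ne v 0 with rfl | hv
    · simp [mink_zero hF]
    · have hu : ‖v‖⁻¹ • v ∈ Metric.sphere (0:E) 1 := by
        simp [norm_smul, inv_mul_cancel₀ (norm_ne_zero_iff.2 hv)]
      have := hmax hu
      rw [mink_homog' hF v hv]
      calc ‖v‖ * F (‖v‖⁻¹ • v) ≤ ‖v‖ * F x1 :=
            mul_le_mul_of_nonneg_left this (norm_nonneg v)
        _ = F x1 * ‖v‖ := mul_comm _ _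


variable {c C : ℝ}

lemma dual_ne (hF : IsMinkowskiNorm F) (γ : E →L[ℝ] ℝ) :
    ((fun v => γ v) '' {v : E | F v ≤ 1}).Nonempty :=
  ⟨γ 0, ⟨0, by simp [mink_zero hF], rfl⟩⟩

lemma dual_bdd (hc : 0 < c) (hlow : ∀ v : E, c * ‖v‖ ≤ F v) (γ : E →L[ℝ] ℝ) :
    BddAbove ((fun v => γ v) '' {v : E | F v ≤ 1}) := by
  refine ⟨‖γ‖ * c⁻¹, ?_⟩
  rintro x ⟨v, hv, rfl⟩
  have h1 : ‖v‖ ≤ c⁻¹ := by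
    have h2 : c * ‖v‖ ≤ 1 := le_trans (hlow v) hv
    calc ‖v‖ = c⁻¹ * (c * ‖v‖) := by field_simp
      _ ≤ c⁻¹ * 1 := mul_le_mul_of_nonneg_left h2 (by positivity)
      _ = c⁻¹ := mul_one _
  calc γ v ≤ ‖γ v‖ := le_abs_self _
    _ ≤ ‖γ‖ * ‖v‖ := γ.le_opNorm v
    _ ≤ ‖γ‖ * c⁻¹ := mul_le_mul_of_nonneg_left h1 (norm_nonneg γ)

lemma le_dual (hc : 0 < c) (hlow : ∀ v : E, c * ‖v‖ ≤ F v) (γ : E →L[ℝ] ℝ)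
    {u : E} (hu : F u ≤ 1) : γ u ≤ dualNorm F γ :=
  le_csSup (dual_bdd hc hlow γ) ⟨u, hu, rfl⟩

lemma dual_le (hF : IsMinkowskiNorm F) (γ : E →L[ℝ] ℝ) {B : ℝ}
    (h : ∀ u : E, F u ≤ 1 → γ u ≤ B) : dualNorm F γ ≤ B := by
  refine csSup_le (dual_ne hF γ) ?_
  rintro x ⟨v, hv, rfl⟩
  exact h v hv

lemma apply_le_dual_mul (hF : IsMinkowskiNorm F) (hc : 0 < c) (hlow : ∀ v : E, c * ‖v‖ ≤ F v)
    (γ : E →L[ℝ] ℝ) (u : E) : γ u ≤ dualNorm F γ * F u := by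
  rcases eq_or_ne u 0 with rfl | hu
  · simp [mink_zero hF]
  · have hFu : 0 < F u := hF.pos u hu
    have h1 : F ((F u)⁻¹ • u) = 1 := by
      rw [hF.homog _ (inv_nonneg.2 hFu.le), inv_mul_cancel₀ hFu.ne']
    have h2 := le_dual hc hlow γ (u := (F u)⁻¹ • u) h1.le
    rw [map_smul, smul_eq_mul] at h2
    calc γ u = F u * ((F u)⁻¹ * γ u) := by field_simp
      _ ≤ F u * dualNorm F γ := mul_le_mul_of_nonneg_left h2 hFu.le
      _ = dualNorm F γ * F u := mul_comm _ _

lemma dual_le_M (hF : IsMinkowskiNorm F) (hc : 0 < c) (hlow : ∀ v : E, c * ‖v‖ ≤ F v)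
    (γ : E →L[ℝ] ℝ) : dualNorm F γ ≤ c⁻¹ * ‖γ‖ := by
  refine dual_le hF γ ?_
  intro u hu
  have h1 : ‖u‖ ≤ c⁻¹ := by
    have h2 : c * ‖u‖ ≤ 1 := le_trans (hlow u) hu
    calc ‖u‖ = c⁻¹ * (c * ‖u‖) := by field_simp
      _ ≤ c⁻¹ * 1 := mul_le_mul_of_nonneg_left h2 (by positivity)
      _ = c⁻¹ := mul_one _
  calc γ u ≤ ‖γ‖ * ‖u‖ := le_trans (le_abs_self _) (γ.le_opNorm u)
    _ ≤ ‖γ‖ * c⁻¹ := mul_le_mul_of_nonneg_left h1 (norm_nonneg γ)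
    _ = c⁻¹ * ‖γ‖ := mul_comm _ _

lemma dual_add_le (hF : IsMinkowskiNorm F) (hc : 0 < c) (hlow : ∀ v : E, c * ‖v‖ ≤ F v)
    (γ δ : E →L[ℝ] ℝ) : dualNorm F (γ + δ) ≤ dualNorm F γ + dualNorm F δ := by
  refine dual_le hF _ ?_
  intro u hu
  have := le_dual hc hlow γ hu
  have := le_dual hc hlow δ hu
  simp only [ContinuousLinearMap.add_apply]
  linarith

lemma dual_pos (hF : IsMinkowskiNorm F) (hc : 0 < c) (hlow : ∀ v : E, c * ‖v‖ ≤ F v)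
    {γ : E →L[ℝ] ℝ} (hγ : γ ≠ 0) : 0 < dualNorm F γ := by
  obtain ⟨v, hv⟩ : ∃ v : E, γ v ≠ 0 := by
    by_contra h
    push_neg at h
    exact hγ (ContinuousLinearMap.ext fun v => by simp [h v])
  set v' : E := if 0 < γ v then v else -v with hv'
  have hγv' : 0 < γ v' := by
    rcases lt_trichotomy (γ v) 0 with h | h | h
    · simp only [hv', if_neg (not_lt.2 h.le), map_neg]; linarith
    · exact absurd h hv
    · simpa [hv', if_pos h] using h
  have hv'0 : v' ≠ 0 := fun h => by simp [h] at hγv'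
  have hFv' : 0 < F v' := hF.pos v' hv'0
  have h1 : F ((F v')⁻¹ • v') = 1 := by
    rw [hF.homog _ (inv_nonneg.2 hFv'.le), inv_mul_cancel₀ hFv'.ne']
  have h2 := le_dual hc hlow γ (u := (F v')⁻¹ • v') h1.le
  rw [map_smul, smul_eq_mul] at h2
  have : 0 < (F v')⁻¹ * γ v' := mul_pos (inv_pos.2 hFv') hγv'
  linarith

lemma second_deriv_sq (hF : IsMinkowskiNorm F) (v d : E) {θ : ℝ} (h : v + θ • d ≠ 0) :
    deriv^[2] (fun σ : ℝ => F (v + σ • d) ^ 2) θ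
      = 2 * fundamentalTensor F (v + θ • d) d d := by
  set G : E → ℝ := fun x => F x ^ 2 with hG
  set ℓ : ℝ → E := fun σ => v + σ • d with hℓdef
  have hGs : ContDiffOn ℝ (⊤ : ℕ∞) G {(0:E)}ᶜ := hF.smooth.pow 2
  have hGat : ∀ p : E, p ≠ 0 → ContDiffAt ℝ (⊤ : ℕ∞) G p := fun p hp =>
    hGs.contDiffAt (isOpen_compl_singleton.mem_nhds hp)
  have hℓ : ∀ σ : ℝ, HasDerivAt ℓ d σ := by
    intro σ
    have h1 : HasDerivAt (fun σ : ℝ => σ • d) ((1:ℝ) • d) σ :=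
      (hasDerivAt_id σ).smul_const d
    rw [one_smul] at h1
    exact h1.const_add v
  have hℓc : Continuous ℓ := continuous_const.add (continuous_id.smul continuous_const)
  have hev : ∀ᶠ σ in 𝓝 θ, ℓ σ ≠ 0 := hℓc.continuousAt.eventually_ne h
  -- first derivative
  have h1 : ∀ σ : ℝ, ℓ σ ≠ 0 → HasDerivAt (fun σ => F (v + σ • d) ^ 2)
      (fderiv ℝ G (ℓ σ) d) σ := by
    intro σ hσ
    have hGd : HasFDerivAt G (fderiv ℝ G (ℓ σ)) (ℓ σ) :=
      ((hGat _ hσ).differentiableAt (by simp)).hasFDerivAt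
    exact hGd.comp_hasDerivAt σ (hℓ σ)
  have hderiv1 : deriv (fun σ : ℝ => F (v + σ • d) ^ 2) =ᶠ[𝓝 θ]
      fun σ => fderiv ℝ G (ℓ σ) d := by
    filter_upwards [hev] with σ hσ
    exact (h1 σ hσ).deriv
  -- second derivative
  have h2 : HasFDerivAt (fderiv ℝ G) (fderiv ℝ (fderiv ℝ G) (ℓ θ)) (ℓ θ) := by
    have := ((hGat _ h).fderiv_right (m := 1) (WithTop.coe_le_coe.2 le_top)).differentiableAt one_ne_zero
    exact this.hasFDerivAt
  have h3 : HasDerivAt (fun σ => fderiv ℝ G (ℓ σ) d)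
      (fderiv ℝ (fderiv ℝ G) (ℓ θ) d d) θ := by
    have h4 : HasFDerivAt (fun u => fderiv ℝ G u d)
        ((ContinuousLinearMap.apply ℝ ℝ d).comp (fderiv ℝ (fderiv ℝ G) (ℓ θ))) (ℓ θ) :=
      (ContinuousLinearMap.apply ℝ ℝ d).hasFDerivAt.comp (ℓ θ) h2
    have h5 := h4.comp_hasDerivAt θ (hℓ θ)
    exact h5
  have key : deriv (deriv (fun σ : ℝ => F (v + σ • d) ^ 2)) θ
      = fderiv ℝ (fderiv ℝ G) (ℓ θ) d d := by
    rw [hderiv1.deriv_eq]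
    exact h3.deriv
  have hiter : deriv^[2] (fun σ : ℝ => F (v + σ • d) ^ 2) θ
      = deriv (deriv (fun σ : ℝ => F (v + σ • d) ^ 2)) θ := rfl
  rw [hiter, key]
  have := iteratedFDeriv_two_apply (𝕜 := ℝ) G (ℓ θ) ![d, d]
  simp only [Matrix.cons_val_zero, Matrix.cons_val_one, Matrix.head_cons] at this
  rw [fundamentalTensor, ← this]
  ring

lemma mink_strict_mid (hF : IsMinkowskiNorm F) {v w : E} (hvw : v ≠ w)
    (hseg : ∀ θ : ℝ, θ ∈ Set.Icc (0:ℝ) 1 → v + θ • (w - v) ≠ 0) :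
    F ((2:ℝ)⁻¹ • (v + w)) ^ 2 < (F v ^ 2 + F w ^ 2) / 2 := by
  set d := w - v with hd
  set φ : ℝ → ℝ := fun σ => F (v + σ • d) ^ 2 with hφ
  have hdne : d ≠ 0 := sub_ne_zero.2 hvw.symm
  have hℓc : Continuous (fun σ : ℝ => v + σ • d) :=
    continuous_const.add (continuous_id.smul continuous_const)
  have hcont : ContinuousOn φ (Set.Icc (0:ℝ) 1) := by
    have hFc : ContinuousOn F {(0:E)}ᶜ := hF.smooth.continuousOn
    have : ContinuousOn (fun σ : ℝ => F (v + σ • d)) (Set.Icc (0:ℝ) 1) :=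
      hFc.comp hℓc.continuousOn (fun θ hθ => hseg θ hθ)
    exact this.pow 2
  have hconv : StrictConvexOn ℝ (Set.Icc (0:ℝ) 1) φ := by
    refine strictConvexOn_of_deriv2_pos (convex_Icc 0 1) hcont ?_
    intro θ hθ
    rw [interior_Icc] at hθ
    have hθ' : v + θ • d ≠ 0 := hseg θ ⟨hθ.1.le, hθ.2.le⟩
    rw [second_deriv_sq hF v d hθ']
    exact mul_pos two_pos (hF.posdef _ hθ' d hdne)
  have h0 : (0:ℝ) ∈ Set.Icc (0:ℝ) 1 := by norm_num
  have h1 : (1:ℝ) ∈ Set.Icc (0:ℝ) 1 := by norm_num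
  have := hconv.2 h0 h1 (show (0:ℝ) ≠ 1 by norm_num)
    (show (0:ℝ) < 2⁻¹ by norm_num) (show (0:ℝ) < 2⁻¹ by norm_num)
    (show (2⁻¹:ℝ) + 2⁻¹ = 1 by norm_num)
  simp only [smul_eq_mul, mul_zero, mul_one, zero_add] at this
  have hmid : v + (2:ℝ)⁻¹ • d = (2:ℝ)⁻¹ • (v + w) := by
    rw [hd]; module
  have hφ0 : φ 0 = F v ^ 2 := by simp [hφ]
  have hφ1 : φ 1 = F w ^ 2 := by simp [hφ, hd]
  rw [hφ0, hφ1] at this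
  have : φ 2⁻¹ < (F v ^ 2 + F w ^ 2) / 2 := by linarith
  simp only [hφ] at this
  rw [hmid] at this
  exact this

lemma leg_unique (hF : IsMinkowskiNorm F) (hc : 0 < c) (hlow : ∀ v : E, c * ‖v‖ ≤ F v)
    {α : E →L[ℝ] ℝ} (ht : 0 < dualNorm F α)
    {v w : E} (hv : F v = dualNorm F α) (hw : F w = dualNorm F α)
    (hav : α v = dualNorm F α ^ 2) (haw : α w = dualNorm F α ^ 2) : v = w := by
  set t := dualNorm F α with htdef
  by_contra hne
  have ht2 : (0:ℝ) < t ^ 2 := by positivity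
  have hseg : ∀ θ : ℝ, θ ∈ Set.Icc (0:ℝ) 1 → v + θ • (w - v) ≠ 0 := by
    intro θ _ hcontra
    have : α (v + θ • (w - v)) = t ^ 2 := by
      simp [map_add, map_smul, map_sub, hav, haw, smul_eq_mul]
    rw [hcontra] at this
    simp at this
    linarith
  have hm := mink_strict_mid hF hne hseg
  rw [hv, hw] at hm
  have hm' : F ((2:ℝ)⁻¹ • (v + w)) ^ 2 < t ^ 2 := by linarith
  have hFm : F ((2:ℝ)⁻¹ • (v + w)) < t := by
    nlinarith [hF.nonneg ((2:ℝ)⁻¹ • (v + w))]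
  have ham : α ((2:ℝ)⁻¹ • (v + w)) = t ^ 2 := by
    simp [map_add, map_smul, hav, haw, smul_eq_mul]
    ring
  have := apply_le_dual_mul hF hc hlow α ((2:ℝ)⁻¹ • (v + w))
  rw [ham, ← htdef] at this
  nlinarith

lemma dual_lip (hF : IsMinkowskiNorm F) (hc : 0 < c) (hlow : ∀ v : E, c * ‖v‖ ≤ F v)
    (α β : E →L[ℝ] ℝ) : |dualNorm F (α + β) - dualNorm F α| ≤ c⁻¹ * ‖β‖ := by
  have h1 : dualNorm F (α + β) ≤ dualNorm F α + c⁻¹ * ‖β‖ := by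
    have := dual_add_le hF hc hlow α β
    have := dual_le_M hF hc hlow β
    linarith
  have h2 : dualNorm F α ≤ dualNorm F (α + β) + c⁻¹ * ‖β‖ := by
    have h3 := dual_add_le hF hc hlow (α + β) (-β)
    rw [add_neg_cancel_right] at h3
    have h4 := dual_le_M hF hc hlow (-β)
    rw [norm_neg] at h4
    linarith
  rw [abs_le]; constructor <;> linarith

lemma leg_continuous [FiniteDimensional ℝ E] (hF : IsMinkowskiNorm F)
    (hc : 0 < c) (hlow : ∀ v : E, c * ‖v‖ ≤ F v) (hupp : ∀ v : E, F v ≤ C * ‖v‖)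
    (Leg : (E →L[ℝ] ℝ) → E)
    (hLeg : ∀ γ : E →L[ℝ] ℝ, F (Leg γ) = dualNorm F γ ∧ γ (Leg γ) = dualNorm F γ ^ 2)
    {α : E →L[ℝ] ℝ} (hα : α ≠ 0) :
    ∀ ε > 0, ∃ δ > 0, ∀ β : E →L[ℝ] ℝ, ‖β‖ < δ → ‖Leg (α + β) - Leg α‖ < ε := by
  set t := dualNorm F α with htdef
  have ht : 0 < t := dual_pos hF hc hlow hα
  -- Lipschitz-type bound for the dual norm
  have hsb : ∀ β : E →L[ℝ] ℝ, |dualNorm F (α + β) - t| ≤ c⁻¹ * ‖β‖ := by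
    intro β
    have h1 : dualNorm F (α + β) ≤ t + c⁻¹ * ‖β‖ := by
      have := dual_add_le hF hc hlow α β
      have := dual_le_M hF hc hlow β
      linarith
    have h2 : t ≤ dualNorm F (α + β) + c⁻¹ * ‖β‖ := by
      have h3 := dual_add_le hF hc hlow (α + β) (-β)
      rw [add_neg_cancel_right] at h3
      have h4 := dual_le_M hF hc hlow (-β)
      rw [norm_neg] at h4
      linarith
    rw [abs_le]; constructor <;> linarith
  intro ε hε
  by_contra hcon
  push_neg at hcon
  have hβ : ∀ n : ℕ, ∃ β : E →L[ℝ] ℝ, ‖β‖ < 1 / (n + 1) ∧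
      ε ≤ ‖Leg (α + β) - Leg α‖ := by
    intro n
    obtain ⟨β, h1, h2⟩ := hcon (1 / (n + 1)) (by positivity)
    exact ⟨β, h1, h2⟩
  choose β hβ1 hβ2 using hβ
  set w : ℕ → E := fun n => Leg (α + β n) with hwdef
  set s : ℕ → ℝ := fun n => dualNorm F (α + β n) with hsdef
  have hFw : ∀ n, F (w n) = s n := fun n => (hLeg (α + β n)).1
  have haw : ∀ n, (α + β n) (w n) = s n ^ 2 := fun n => (hLeg (α + β n)).2
  have hβle1 : ∀ n, ‖β n‖ ≤ 1 := by
    intro n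
    refine (hβ1 n).le.trans ?_
    rw [div_le_one (by positivity)]
    have : (0:ℝ) ≤ n := Nat.cast_nonneg n
    linarith
  set R : ℝ := (t + c⁻¹) / c with hRdef
  have hwK : ∀ n, w n ∈ Metric.closedBall (0 : E) R := by
    intro n
    rw [Metric.mem_closedBall, dist_zero_right]
    have h1 : c * ‖w n‖ ≤ s n := by rw [← hFw n]; exact hlow _
    have h2 : s n ≤ t + c⁻¹ := by
      have := (abs_le.1 (hsb (β n))).2
      have h3 : c⁻¹ * ‖β n‖ ≤ c⁻¹ * 1 :=
        mul_le_mul_of_nonneg_left (hβle1 n) (by positivity)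
      rw [mul_one] at h3
      linarith
    rw [hRdef, le_div_iff₀ hc]
    calc ‖w n‖ * c = c * ‖w n‖ := mul_comm _ _
      _ ≤ t + c⁻¹ := le_trans h1 h2
  obtain ⟨L, _, φ, hφmono, hφtend⟩ :=
    (isCompact_closedBall (0:E) R).tendsto_subseq hwK
  have hφle : ∀ n, ‖β (φ n)‖ ≤ 1 / (n + 1) := by
    intro n
    refine (hβ1 (φ n)).le.trans ?_
    apply one_div_le_one_div_of_le (by positivity)
    have h5 : n ≤ φ n := hφmono.le_apply
    have h6 : (n:ℝ) ≤ (φ n : ℝ) := Nat.cast_le.2 h5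
    linarith
  have hβ0 : Tendsto (fun n => ‖β (φ n)‖) atTop (𝓝 0) :=
    squeeze_zero (fun n => norm_nonneg _) hφle tendsto_one_div_add_atTop_nhds_zero_nat
  have hst : Tendsto (fun n => s (φ n)) atTop (𝓝 t) := by
    rw [← tendsto_sub_nhds_zero_iff]
    refine squeeze_zero_norm (fun n => ?_) (by simpa using hβ0.const_mul c⁻¹)
    simpa using hsb (β (φ n))
  have hwnorm : Tendsto (fun n => ‖w (φ n) - L‖) atTop (𝓝 0) := by
    have h7 : Tendsto (fun n => w (φ n) - L) atTop (𝓝 (L - L)) :=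
      hφtend.sub (tendsto_const_nhds (x := L))
    rw [sub_self] at h7
    simpa using h7.norm
  have hL0 : L ≠ 0 := by
    intro hL
    have h1 : Tendsto (fun n => F (w (φ n))) atTop (𝓝 0) := by
      refine squeeze_zero (fun n => hF.nonneg _) (fun n => hupp _) ?_
      have h2 : Tendsto (fun n => ‖w (φ n)‖) atTop (𝓝 0) := by
        have := hφtend.norm
        rw [hL] at this
        simpa using this
      simpa using h2.const_mul C
    have h3 : Tendsto (fun n => s (φ n)) atTop (𝓝 0) := by
      refine h1.congr fun n => hFw (φ n)
    exact ht.ne' (tendsto_nhds_unique hst h3)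
  have hFL : F L = t := by
    have hcontF : ContinuousAt F L :=
      hF.smooth.continuousOn.continuousAt (isOpen_compl_singleton.mem_nhds hL0)
    have h1 : Tendsto (fun n => F (w (φ n))) atTop (𝓝 (F L)) :=
      hcontF.tendsto.comp hφtend
    have h2 : Tendsto (fun n => F (w (φ n))) atTop (𝓝 t) :=
      hst.congr fun n => (hFw (φ n)).symm
    exact tendsto_nhds_unique h1 h2
  have haL : α L = t ^ 2 := by
    have h1 : Tendsto (fun n => α (w (φ n))) atTop (𝓝 (α L)) :=
      α.continuous.continuousAt.tendsto.comp hφtend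
    have h2 : Tendsto (fun n => β (φ n) (w (φ n))) atTop (𝓝 0) := by
      refine squeeze_zero_norm (fun n => ?_) (by simpa using hβ0.const_mul (R + 1))
      calc ‖β (φ n) (w (φ n))‖ ≤ ‖β (φ n)‖ * ‖w (φ n)‖ := (β (φ n)).le_opNorm _
        _ ≤ ‖β (φ n)‖ * R := by
            refine mul_le_mul_of_nonneg_left ?_ (norm_nonneg _)
            have := hwK (φ n)
            rwa [Metric.mem_closedBall, dist_zero_right] at this
        _ ≤ (R + 1) * ‖β (φ n)‖ := by nlinarith [norm_nonneg (β (φ n))]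
    have h3 : Tendsto (fun n => (α + β (φ n)) (w (φ n))) atTop (𝓝 (α L)) := by
      have := h1.add h2
      rw [add_zero] at this
      refine this.congr fun n => ?_
      simp
    have h4 : Tendsto (fun n => (α + β (φ n)) (w (φ n))) atTop (𝓝 (t ^ 2)) := by
      have := hst.pow 2
      refine this.congr fun n => (haw (φ n)).symm
    exact tendsto_nhds_unique h3 h4
  have hLeq : Leg α = L :=
    leg_unique hF hc hlow ht (hLeg α).1 hFL (hLeg α).2 haL
  have hfin : ε ≤ (0:ℝ) := by
    refine ge_of_tendsto hwnorm ?_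
    filter_upwards with n
    calc ε ≤ ‖Leg (α + β (φ n)) - Leg α‖ := hβ2 (φ n)
      _ = ‖w (φ n) - L‖ := by rw [hLeq]
  linarith

end Aux

set_option maxHeartbeats 1000000 in
/-- For every `α ≠ 0` the function `(F*)²/2` is Fréchet differentiable at `α` and,
under the canonical identification of `E**` with `E`, its derivative equals the
Legendre transform: `β (L* α) = D((F*)²/2)(α)[β]` for all `β ∈ E*`. -/
theorem legendre_transform_eq_deriv_dual
    {E : Type*} [NormedAddCommGroup E] [NormedSpace ℝ E] [FiniteDimensional ℝ E]
    {F : E → ℝ} (hF : IsMinkowskiNorm F)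
    (Leg : (E →L[ℝ] ℝ) → E)
    (hLeg : ∀ α : E →L[ℝ] ℝ,
      F (Leg α) = dualNorm F α ∧ α (Leg α) = (dualNorm F α) ^ 2) :
    ∀ α : E →L[ℝ] ℝ, α ≠ 0 →
      DifferentiableAt ℝ (fun β => (dualNorm F β) ^ 2 / 2) α ∧
      ∀ β : E →L[ℝ] ℝ,
        fderiv ℝ (fun β => (dualNorm F β) ^ 2 / 2) α β = β (Leg α) := by
  intro α hα
  obtain ⟨v0, hv0⟩ : ∃ v0 : E, α v0 ≠ 0 := by
    by_contra hcon
    push_neg at hcon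
    exact hα (ContinuousLinearMap.ext fun u => by simp [hcon u])
  have hnt : Nontrivial E := nontrivial_of_ne v0 0 (fun hh => hv0 (by simp [hh]))
  obtain ⟨c, C, hc, hlow, hupp⟩ := mink_bounds hF
  have hM : 0 < c⁻¹ := inv_pos.2 hc
  have ht : 0 < dualNorm F α := dual_pos hF hc hlow hα
  have hFv : F (Leg α) = dualNorm F α := (hLeg α).1
  have hαv : α (Leg α) = dualNorm F α ^ 2 := (hLeg α).2
  have hmain : HasFDerivAt (fun β => (dualNorm F β) ^ 2 / 2)
      (ContinuousLinearMap.apply ℝ ℝ (Leg α)) α := by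
    rw [hasFDerivAt_iff_isLittleO_nhds_zero]
    have hfun : (fun h : E →L[ℝ] ℝ =>
        (fun β => dualNorm F β ^ 2 / 2) (α + h) - (fun β => dualNorm F β ^ 2 / 2) α
          - (ContinuousLinearMap.apply ℝ ℝ (Leg α)) h)
        = fun h : E →L[ℝ] ℝ =>
            dualNorm F (α + h) ^ 2 / 2 - dualNorm F α ^ 2 / 2 - h (Leg α) := rfl
    rw [hfun, Asymptotics.isLittleO_iff]
    intro ε' hε'
    obtain ⟨δ₁, hδ₁, hδ₁'⟩ := leg_continuous hF hc hlow hupp Leg hLeg hα (ε' / 6)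
      (by positivity)
    have hδ : 0 < min δ₁ (min (dualNorm F α / (2 * c⁻¹))
        (ε' * dualNorm F α / (2 * (c⁻¹ * ‖Leg α‖ + 1)))) :=
      lt_min hδ₁ (lt_min (by positivity) (by positivity))
    filter_upwards [Metric.ball_mem_nhds (0 : E →L[ℝ] ℝ) hδ] with h hh
    rw [Metric.mem_ball, dist_zero_right] at hh
    -- abbreviations (plain lets via generalize-free names)
    have hh1 : ‖h‖ < δ₁ := lt_of_lt_of_le hh (min_le_left _ _)
    have hh2 : ‖h‖ ≤ dualNorm F α / (2 * c⁻¹) :=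
      le_trans hh.le (le_trans (min_le_right _ _) (min_le_left _ _))
    have hh3 : ‖h‖ ≤ ε' * dualNorm F α / (2 * (c⁻¹ * ‖Leg α‖ + 1)) :=
      le_trans hh.le (le_trans (min_le_right _ _) (min_le_right _ _))
    obtain ⟨hFw, haw⟩ := hLeg (α + h)
    have hlip : |dualNorm F (α + h) - dualNorm F α| ≤ c⁻¹ * ‖h‖ :=
      dual_lip hF hc hlow α h
    -- notation
    generalize hsdef : dualNorm F (α + h) = s at *
    generalize htdef : dualNorm F α = t at *
    generalize hwdef : Leg (α + h) = w at *
    generalize hvdef : Leg α = v at *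
    have hMh : c⁻¹ * ‖h‖ ≤ t / 2 := by
      have h5 := mul_le_mul_of_nonneg_left hh2 hM.le
      calc c⁻¹ * ‖h‖ ≤ c⁻¹ * (t / (2 * c⁻¹)) := h5
        _ = t / 2 := by field_simp
    have hs_lb : t / 2 ≤ s := by have := (abs_le.1 hlip).1; linarith
    have hs_ub : s ≤ 3 * t / 2 := by have := (abs_le.1 hlip).2; linarith
    have hsmall : c⁻¹ * ‖v‖ * ‖h‖ ≤ ε' * t / 2 := by
      have h1 : c⁻¹ * ‖v‖ * ‖h‖ ≤ (c⁻¹ * ‖v‖ + 1) * ‖h‖ := by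
        nlinarith [norm_nonneg h]
      have h2 : (c⁻¹ * ‖v‖ + 1) * ‖h‖
          ≤ (c⁻¹ * ‖v‖ + 1) * (ε' * t / (2 * (c⁻¹ * ‖v‖ + 1))) :=
        mul_le_mul_of_nonneg_left hh3 (by positivity)
      have h3 : (c⁻¹ * ‖v‖ + 1) * (ε' * t / (2 * (c⁻¹ * ‖v‖ + 1))) = ε' * t / 2 := by
        field_simp
      linarith
    have hwv : ‖w - v‖ ≤ ε' / 6 := by
      have h9 := (hδ₁' h hh1).le
      rw [hwdef] at h9
      exact h9
    -- key inequalities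
    have f1 : h v ≤ (s - t) * t := by
      have h1 := apply_le_dual_mul hF hc hlow (α + h) v
      rw [hFv, hsdef] at h1
      simp only [ContinuousLinearMap.add_apply] at h1
      rw [hαv] at h1
      nlinarith
    have f2 : s ^ 2 - t * s ≤ h w := by
      have h1 := apply_le_dual_mul hF hc hlow α w
      rw [hFw, htdef] at h1
      have h2 : α w = s ^ 2 - h w := by
        simp only [ContinuousLinearMap.add_apply] at haw
        linarith
      rw [h2] at h1
      linarith
    have hX0 : (0:ℝ) ≤ s ^ 2 / 2 - t ^ 2 / 2 - h v := by
      nlinarith [sq_nonneg (s - t)]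
    have q1 : h w - h v ≤ ‖h‖ * (ε' / 6) := by
      have h1 : h w - h v = h (w - v) := (map_sub h w v).symm
      rw [h1]
      calc h (w - v) ≤ |h (w - v)| := le_abs_self _
        _ ≤ ‖h‖ * ‖w - v‖ := h.le_opNorm _
        _ ≤ ‖h‖ * (ε' / 6) := mul_le_mul_of_nonneg_left hwv (norm_nonneg h)
    have q2 : h v * (t - s) ≤ c⁻¹ * ‖v‖ * ‖h‖ * ‖h‖ := by
      calc h v * (t - s) ≤ |h v * (t - s)| := le_abs_self _
        _ = |h v| * |t - s| := abs_mul _ _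
        _ ≤ (‖h‖ * ‖v‖) * (c⁻¹ * ‖h‖) := by
            refine mul_le_mul (h.le_opNorm v) ?_ (abs_nonneg _) (by positivity)
            rw [abs_sub_comm]; exact hlip
        _ = c⁻¹ * ‖v‖ * ‖h‖ * ‖h‖ := by ring
    have key : 2 * s * (s ^ 2 / 2 - t ^ 2 / 2 - h v)
        ≤ (h w - h v) * (s + t) + h v * (t - s) := by
      have p1 : (s ^ 2 - t * s) * (s + t) ≤ h w * (s + t) :=
        mul_le_mul_of_nonneg_right f2 (by linarith)
      nlinarith [p1]
    have key2 : t * (s ^ 2 / 2 - t ^ 2 / 2 - h v)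
        ≤ 2 * s * (s ^ 2 / 2 - t ^ 2 / 2 - h v) := by
      nlinarith [mul_nonneg (by linarith : (0:ℝ) ≤ 2 * s - t) hX0]
    have r1 : (h w - h v) * (s + t) ≤ (‖h‖ * (ε' / 6)) * (s + t) :=
      mul_le_mul_of_nonneg_right q1 (by linarith)
    have r2 : (‖h‖ * (ε' / 6)) * (s + t) ≤ (‖h‖ * (ε' / 6)) * (5 * t / 2) :=
      mul_le_mul_of_nonneg_left (by linarith) (by positivity)
    have r3 : c⁻¹ * ‖v‖ * ‖h‖ * ‖h‖ ≤ (ε' * t / 2) * ‖h‖ := by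
      calc c⁻¹ * ‖v‖ * ‖h‖ * ‖h‖ = (c⁻¹ * ‖v‖ * ‖h‖) * ‖h‖ := by ring
        _ ≤ (ε' * t / 2) * ‖h‖ := mul_le_mul_of_nonneg_right hsmall (norm_nonneg h)
    have hfinal : t * (s ^ 2 / 2 - t ^ 2 / 2 - h v) ≤ t * (ε' * ‖h‖) := by
      nlinarith [mul_nonneg (mul_nonneg hε'.le ht.le) (norm_nonneg h)]
    have hXle : s ^ 2 / 2 - t ^ 2 / 2 - h v ≤ ε' * ‖h‖ :=
      le_of_mul_le_mul_left (by linarith) ht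
    show ‖s ^ 2 / 2 - t ^ 2 / 2 - h v‖ ≤ ε' * ‖h‖
    rw [Real.norm_eq_abs, abs_of_nonneg hX0]
    exact hXle
  refine ⟨hmain.differentiableAt, ?_⟩
  intro β
  rw [hmain.fderiv]
  rfl
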